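/- arXiv:2211.01337 — 8 statements merged into one kernel-verified Lean document; each statement's English description precedes it below -/
import Mathlib

section
/- If a bounded lattice L is pseudocomplemented, then L contains no ternary sequence (a, b, c) with a, b, c all nonzero, c ∧ a = c ∧ b = 0, and c ∨ a = c ∨ b = a ∨ b. -/
theorem stmt_4 {L : Type*} [Lattice L] [BoundedOrder L]
    (hpc : ∀ a : L, ∃ s : L, a ⊓ s = ⊥ ∧ ∀ x : L, a ⊓ x = ⊥ → x ≤ s) :
    ¬ ∃ a b c : L, a ≠ ⊥ ∧ b ≠ ⊥ ∧ c ≠ ⊥ ∧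
      c ⊓ a = ⊥ ∧ c ⊓ b = ⊥ ∧ c ⊔ a = c ⊔ b ∧ c ⊔ b = a ⊔ b := by
  rintro ⟨a, b, c, ha, hb, hc, hca, hcb, h1, h2⟩
  obtain ⟨s, hs0, hsmax⟩ := hpc c
  have hA : a ≤ s := hsmax a hca
  have hB : b ≤ s := hsmax b hcb
  have hcs : c ≤ s := by
    have : c ≤ a ⊔ b := h2 ▸ le_sup_left
    exact this.trans (sup_le hA hB)
  exact hc (by simpa [inf_eq_left.mpr hcs] using hs0)
end

section
/- Let L be a modular lattice with least element 0 and a, b, c nonzero elements with c ∧ a = c ∧ b = 0, c ∨ a = c ∨ b = a ∨ b, and a ∧ b ≠ 0. Then (c ∨ (a ∧ b)) ∧ a = a ∧ b and (c ∨ (a ∧ b)) ∧ b = a ∧ b, and c < c ∨ (a ∧ b) < a ∨ b. -/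
theorem stmt_7 {L : Type*} [Lattice L] [IsModularLattice L] [OrderBot L]
    (a b c : L) (ha : a ≠ ⊥) (hb : b ≠ ⊥) (hc : c ≠ ⊥)
    (hca : c ⊓ a = ⊥) (hcb : c ⊓ b = ⊥)
    (hja : c ⊔ a = c ⊔ b) (hjb : c ⊔ b = a ⊔ b) (hab : a ⊓ b ≠ ⊥) :
    (c ⊔ (a ⊓ b)) ⊓ a = a ⊓ b ∧ (c ⊔ (a ⊓ b)) ⊓ b = a ⊓ b ∧
    c < c ⊔ (a ⊓ b) ∧ c ⊔ (a ⊓ b) < a ⊔ b := by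
  have h1 : (c ⊔ (a ⊓ b)) ⊓ a = a ⊓ b := by
    rw [sup_comm, sup_inf_assoc_of_le c inf_le_left, hca, sup_bot_eq]
  have h2 : (c ⊔ (a ⊓ b)) ⊓ b = a ⊓ b := by
    rw [sup_comm, sup_inf_assoc_of_le c inf_le_right, hcb, sup_bot_eq]
  refine ⟨h1, h2, ?_, ?_⟩
  · refine lt_of_le_of_ne le_sup_left fun h => hab ?_
    have : a ⊓ b ≤ c := h ▸ le_sup_right
    have : a ⊓ b ≤ c ⊓ a := le_inf this inf_le_left
    exact le_bot_iff.mp (hca ▸ this)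
  · refine lt_of_le_of_ne (sup_le (le_trans le_sup_left (hja.trans hjb).le)
      (le_trans inf_le_left le_sup_left)) fun h => ?_
    have haa : a ≤ c ⊔ (a ⊓ b) := h ▸ le_sup_left
    have : a = a ⊓ b := by
      rw [← h1]; exact le_antisymm (le_inf haa le_rfl) inf_le_right
    have hab2 : a ≤ b := this ▸ inf_le_right
    have hbb : a ⊔ b = b := sup_eq_right.mpr hab2
    have : c ≤ b := by
      have := hjb.trans hbb
      exact le_trans le_sup_left this.le
    exact hc (le_bot_iff.mp (hcb ▸ le_inf le_rfl this))
end

section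
/- Let L be a modular lattice with least element 0, c nonzero, and a, b distinct maximal elements with c ∧ a = 0, c ∧ b = 0. If a ∨ c = b ∨ c > a ∨ b, then the triple (a, b, c ∧ (a ∨ b)) consists of nonzero elements x, y, z with z ∧ x = z ∧ y = 0 and z ∨ x = z ∨ y = x ∨ y. -/
theorem stmt_9 {L : Type*} [Lattice L] [IsModularLattice L] [OrderBot L]
    (a b c : L) (hc : c ≠ ⊥) (hab : a ≠ b)
    (hca : c ⊓ a = ⊥) (hamax : ∀ x : L, a < x → c ⊓ x ≠ ⊥)
    (hcb : c ⊓ b = ⊥) (hbmax : ∀ x : L, b < x → c ⊓ x ≠ ⊥)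
    (hj : a ⊔ c = b ⊔ c) (hgt : a ⊔ b < a ⊔ c) :
    a ≠ ⊥ ∧ b ≠ ⊥ ∧ c ⊓ (a ⊔ b) ≠ ⊥ ∧
    (c ⊓ (a ⊔ b)) ⊓ a = ⊥ ∧ (c ⊓ (a ⊔ b)) ⊓ b = ⊥ ∧
    (c ⊓ (a ⊔ b)) ⊔ a = (c ⊓ (a ⊔ b)) ⊔ b ∧ (c ⊓ (a ⊔ b)) ⊔ b = a ⊔ b := by
  have hlab : a < a ⊔ b := by
    rcases lt_or_eq_of_le (le_sup_left : a ≤ a ⊔ b) with h | h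
    · exact h
    · exact absurd hca (hbmax a (lt_of_le_of_ne (sup_eq_left.mp h.symm) (Ne.symm hab)))
  have hlba : b < a ⊔ b := by
    rcases lt_or_eq_of_le (le_sup_right : b ≤ a ⊔ b) with h | h
    · exact h
    · exact absurd hcb (hamax b (lt_of_le_of_ne (sup_eq_right.mp h.symm) hab))
  have ha : a ≠ ⊥ := by
    rintro rfl
    rw [bot_sup_eq] at hj
    have hbc : b ≤ c := sup_eq_right.mp hj.symm
    exact hab ((le_bot_iff.mp (by rw [← hcb]; exact le_inf hbc le_rfl))).symm
  have hb : b ≠ ⊥ := by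
    rintro rfl
    rw [bot_sup_eq] at hj
    have hac : a ≤ c := sup_eq_right.mp hj
    exact hab (le_bot_iff.mp (by rw [← hca]; exact le_inf hac le_rfl))
  have hz : c ⊓ (a ⊔ b) ≠ ⊥ := hamax _ hlab
  have hza : (c ⊓ (a ⊔ b)) ⊓ a = ⊥ := by
    rw [inf_assoc, inf_eq_right.mpr (le_sup_left : a ≤ a ⊔ b), hca]
  have hzb : (c ⊓ (a ⊔ b)) ⊓ b = ⊥ := by
    rw [inf_assoc, inf_eq_right.mpr (le_sup_right : b ≤ a ⊔ b), hcb]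
  have key : ∀ x : L, x ≤ a ⊔ b → x ⊔ c = a ⊔ c → (c ⊓ (a ⊔ b)) ⊔ x = a ⊔ b := by
    intro x hx hxc
    rw [inf_comm, inf_sup_assoc_of_le c hx, sup_comm c x, hxc]
    exact inf_eq_left.mpr hgt.le
  have h1 := key a le_sup_left rfl
  have h2 := key b le_sup_right hj.symm
  exact ⟨ha, hb, hz, hza, hzb, h1.trans h2.symm, h2⟩
end

section
/- Let L be a modular lattice with least element 0, c nonzero, and a, b distinct maximal elements with c ∧ a = 0, c ∧ b = 0. If a ∨ c < b ∨ c and a ∨ b = b ∨ c, then the triple (a, (a ∨ c) ∧ b, c) consists of nonzero elements x, y, z with z ∧ x = z ∧ y = 0 and z ∨ x = z ∨ y = x ∨ y. -/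
theorem stmt_10 {L : Type*} [Lattice L] [IsModularLattice L] [OrderBot L]
    (a b c : L) (hc : c ≠ ⊥) (hab : a ≠ b)
    (hca : c ⊓ a = ⊥) (hamax : ∀ x : L, a < x → c ⊓ x ≠ ⊥)
    (hcb : c ⊓ b = ⊥) (hbmax : ∀ x : L, b < x → c ⊓ x ≠ ⊥)
    (hlt : a ⊔ c < b ⊔ c) (hj : a ⊔ b = b ⊔ c) :
    a ≠ ⊥ ∧ (a ⊔ c) ⊓ b ≠ ⊥ ∧ c ≠ ⊥ ∧
    c ⊓ a = ⊥ ∧ c ⊓ ((a ⊔ c) ⊓ b) = ⊥ ∧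
    c ⊔ a = c ⊔ ((a ⊔ c) ⊓ b) ∧ c ⊔ ((a ⊔ c) ⊓ b) = a ⊔ ((a ⊔ c) ⊓ b) := by
  have ha : a ≠ ⊥ := by
    intro h
    exact hamax b (h ▸ bot_lt_iff_ne_bot.2 (fun hb => hab (h.trans hb.symm))) hcb
  -- c ⊔ ((a⊔c)⊓b) = a ⊔ c
  have h1 : c ⊔ (a ⊔ c) ⊓ b = a ⊔ c := by
    rw [inf_comm, ← sup_inf_assoc_of_le b (le_sup_right : c ≤ a ⊔ c)]
    exact inf_eq_right.2 (le_of_lt (by rwa [sup_comm c b]))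
  have h2 : a ⊔ (a ⊔ c) ⊓ b = a ⊔ c := by
    rw [inf_comm, ← sup_inf_assoc_of_le b (le_sup_left : a ≤ a ⊔ c), hj]
    exact inf_eq_right.2 (le_of_lt hlt)
  refine ⟨ha, ?_, hc, hca, ?_, ?_, ?_⟩
  · intro h
    rw [h, sup_bot_eq] at h1
    have : a ≤ c := le_trans le_sup_left h1.ge
    exact ha (by rw [← hca, inf_eq_right.2 this])
  · exact le_bot_iff.1 (le_trans (inf_le_inf_left c inf_le_right) hcb.le)
  · rw [h1, sup_comm]
  · rw [h1, h2]
end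

section
/- Let L be a modular lattice with least element 0, c nonzero, and a, b distinct maximal elements with c ∧ a = 0, c ∧ b = 0. If a ∨ c and b ∨ c are incomparable and (a ∨ c) ∧ (b ∨ c) ≤ a ∨ b, then the triple (a ∧ (b ∨ c), b ∧ (a ∨ c), c) consists of nonzero elements x, y, z with z ∧ x = z ∧ y = 0 and z ∨ x = z ∨ y = x ∨ y. -/
/-- If `a` is maximal with respect to `c ⊓ a = ⊥`, then `a ⊔ c` is essential:
any `t` with `(a ⊔ c) ⊓ t = ⊥` must be `⊥`. -/
lemma ess_aux {L : Type*} [Lattice L] [IsModularLattice L] [OrderBot L]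
    {a c : L} (hca : c ⊓ a = ⊥) (hamax : ∀ x : L, a < x → c ⊓ x ≠ ⊥)
    {t : L} (ht : (a ⊔ c) ⊓ t = ⊥) : t = ⊥ := by
  have h2 : (a ⊔ t) ⊓ (a ⊔ c) = a := by
    rw [sup_inf_assoc_of_le t le_sup_left, inf_comm t (a ⊔ c), ht, sup_bot_eq]
  have h1 : c ⊓ (a ⊔ t) = ⊥ := by
    have hle1 : c ⊓ (a ⊔ t) ≤ a := by
      calc c ⊓ (a ⊔ t) ≤ (a ⊔ c) ⊓ (a ⊔ t) := inf_le_inf_right _ le_sup_right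
        _ = a := by rw [inf_comm]; exact h2
    have : c ⊓ (a ⊔ t) ≤ c ⊓ a := le_inf inf_le_left hle1
    exact le_bot_iff.mp (hca ▸ this)
  have hta : a ⊔ t = a := by
    by_contra h
    exact hamax (a ⊔ t) (lt_of_le_of_ne le_sup_left (Ne.symm h)) h1
  have ht' : t ≤ a ⊔ c := le_trans (le_sup_right.trans hta.le) le_sup_left
  rw [← ht, inf_eq_right.mpr ht']

theorem stmt_11 {L : Type*} [Lattice L] [IsModularLattice L] [OrderBot L]
    (a b c : L) (hc : c ≠ ⊥) (hab : a ≠ b)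
    (hca : c ⊓ a = ⊥) (hamax : ∀ x : L, a < x → c ⊓ x ≠ ⊥)
    (hcb : c ⊓ b = ⊥) (hbmax : ∀ x : L, b < x → c ⊓ x ≠ ⊥)
    (hpar : ¬ a ⊔ c ≤ b ⊔ c ∧ ¬ b ⊔ c ≤ a ⊔ c)
    (hle : (a ⊔ c) ⊓ (b ⊔ c) ≤ a ⊔ b) :
    a ⊓ (b ⊔ c) ≠ ⊥ ∧ b ⊓ (a ⊔ c) ≠ ⊥ ∧ c ≠ ⊥ ∧
    c ⊓ (a ⊓ (b ⊔ c)) = ⊥ ∧ c ⊓ (b ⊓ (a ⊔ c)) = ⊥ ∧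
    c ⊔ (a ⊓ (b ⊔ c)) = c ⊔ (b ⊓ (a ⊔ c)) ∧
    c ⊔ (b ⊓ (a ⊔ c)) = (a ⊓ (b ⊔ c)) ⊔ (b ⊓ (a ⊔ c)) := by
  have ha : a ≠ ⊥ := by
    intro h
    subst h
    exact hamax b (bot_lt_iff_ne_bot.mpr (Ne.symm hab)) hcb
  have hb : b ≠ ⊥ := by
    intro h
    subst h
    exact hbmax a (bot_lt_iff_ne_bot.mpr hab) hca
  set x := a ⊓ (b ⊔ c) with hx
  set y := b ⊓ (a ⊔ c) with hy
  have hxne : x ≠ ⊥ := by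
    intro h
    exact ha (ess_aux hcb hbmax (by rw [inf_comm]; exact h))
  have hyne : y ≠ ⊥ := by
    intro h
    exact hb (ess_aux hca hamax (by rw [inf_comm]; exact h))
  have hcx : c ⊓ x = ⊥ := by
    apply le_bot_iff.mp
    calc c ⊓ x ≤ c ⊓ a := le_inf inf_le_left (inf_le_right.trans inf_le_left)
      _ = ⊥ := hca
  have hcy : c ⊓ y = ⊥ := by
    apply le_bot_iff.mp
    calc c ⊓ y ≤ c ⊓ b := le_inf inf_le_left (inf_le_right.trans inf_le_left)
      _ = ⊥ := hcb
  -- c ⊔ x = (a ⊔ c) ⊓ (b ⊔ c)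
  have hcxd : c ⊔ x = (a ⊔ c) ⊓ (b ⊔ c) := by
    rw [hx, ← sup_inf_assoc_of_le a le_sup_right, sup_comm c a]
  have hcyd : c ⊔ y = (a ⊔ c) ⊓ (b ⊔ c) := by
    rw [hy, ← sup_inf_assoc_of_le b le_sup_right, sup_comm c b, inf_comm]
  set d := (a ⊔ c) ⊓ (b ⊔ c) with hd
  have hyd : y ≤ d := le_inf inf_le_right (inf_le_left.trans le_sup_left)
  have hxy : d = x ⊔ y := by
    have hax : a ⊓ d = x := by
      rw [hd, hx, ← inf_assoc, inf_sup_self]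
    have hya : y ⊔ a = (a ⊔ b) ⊓ (a ⊔ c) := by
      rw [sup_comm]
      exact (sup_inf_assoc_of_le b le_sup_left).symm
    have : (y ⊔ a) ⊓ d = y ⊔ (a ⊓ d) := sup_inf_assoc_of_le a hyd
    rw [hax] at this
    have hdle : d ≤ (a ⊔ b) ⊓ (a ⊔ c) := le_inf hle inf_le_left
    rw [hya, inf_eq_right.mpr hdle] at this
    rw [this, sup_comm]
  exact ⟨hxne, hyne, hc, hcx, hcy, hcxd.trans hcyd.symm, hcyd.trans hxy⟩
end

section
/- Let L be a modular lattice with least element 0, c nonzero, and a, b distinct maximal elements with c ∧ a = 0, c ∧ b = 0. If a ∨ c and b ∨ c are incomparable and (a ∨ c) ∧ (b ∨ c) is not ≤ a ∨ b, then the triple (a ∧ (b ∨ c), b ∧ (a ∨ c), (a ∨ b) ∧ c) consists of nonzero elements x, y, z with z ∧ x = z ∧ y = 0 and z ∨ x = z ∨ y = x ∨ y. -/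
theorem stmt_12 {L : Type*} [Lattice L] [IsModularLattice L] [OrderBot L]
    (a b c : L) (hc : c ≠ ⊥) (hab : a ≠ b)
    (hca : c ⊓ a = ⊥) (hamax : ∀ x : L, a < x → c ⊓ x ≠ ⊥)
    (hcb : c ⊓ b = ⊥) (hbmax : ∀ x : L, b < x → c ⊓ x ≠ ⊥)
    (hpar : ¬ a ⊔ c ≤ b ⊔ c ∧ ¬ b ⊔ c ≤ a ⊔ c)
    (hnle : ¬ (a ⊔ c) ⊓ (b ⊔ c) ≤ a ⊔ b) :
    a ⊓ (b ⊔ c) ≠ ⊥ ∧ b ⊓ (a ⊔ c) ≠ ⊥ ∧ (a ⊔ b) ⊓ c ≠ ⊥ ∧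
    ((a ⊔ b) ⊓ c) ⊓ (a ⊓ (b ⊔ c)) = ⊥ ∧ ((a ⊔ b) ⊓ c) ⊓ (b ⊓ (a ⊔ c)) = ⊥ ∧
    ((a ⊔ b) ⊓ c) ⊔ (a ⊓ (b ⊔ c)) = ((a ⊔ b) ⊓ c) ⊔ (b ⊓ (a ⊔ c)) ∧
    ((a ⊔ b) ⊓ c) ⊔ (b ⊓ (a ⊔ c)) = (a ⊓ (b ⊔ c)) ⊔ (b ⊓ (a ⊔ c)) := by
  set z := (a ⊔ b) ⊓ c with hzdef
  set x := a ⊓ (b ⊔ c) with hxdef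
  set y := b ⊓ (a ⊔ c) with hydef
  have hzc : z ≤ c := inf_le_right
  have hxa : x ≤ a := inf_le_left
  have hyb : y ≤ b := inf_le_left
  -- key sup identities
  have key1 : z ⊔ x = ((a ⊔ b) ⊓ (c ⊔ a)) ⊓ (b ⊔ c) := by
    have h1 : z ≤ b ⊔ c := hzc.trans le_sup_right
    rw [hxdef, ← sup_inf_assoc_of_le a h1, hzdef, inf_sup_assoc_of_le c le_sup_left]
  have key2 : z ⊔ y = ((a ⊔ b) ⊓ (c ⊔ b)) ⊓ (a ⊔ c) := by
    have h1 : z ≤ a ⊔ c := hzc.trans le_sup_right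
    rw [hydef, ← sup_inf_assoc_of_le b h1, hzdef, inf_sup_assoc_of_le c le_sup_right]
  have key3 : x ⊔ y = ((b ⊔ c) ⊓ (a ⊔ b)) ⊓ (a ⊔ c) := by
    have h1 : x ≤ a ⊔ c := hxa.trans le_sup_left
    rw [hydef, ← sup_inf_assoc_of_le b h1, hxdef, inf_comm a (b ⊔ c),
      inf_sup_assoc_of_le a le_sup_left]
  have e12 : z ⊔ x = z ⊔ y := by
    rw [key1, key2, sup_comm c a, sup_comm c b]
    ac_rfl
  have e23 : z ⊔ y = x ⊔ y := by
    rw [key2, key3, sup_comm c b]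
    ac_rfl
  -- z ≠ ⊥
  have hba : ¬ b ≤ a := by
    intro h
    rcases h.lt_or_eq with h' | h'
    · exact hbmax a h' hca
    · exact hab h'.symm
  have hz : z ≠ ⊥ := by
    have := hamax (a ⊔ b) (left_lt_sup.mpr hba)
    rwa [inf_comm] at this
  -- meets
  have mzx : z ⊓ x = ⊥ := le_bot_iff.mp <|
    (inf_le_inf hzc hxa).trans (le_of_eq hca)
  have mzy : z ⊓ y = ⊥ := le_bot_iff.mp <|
    (inf_le_inf hzc hyb).trans (le_of_eq hcb)
  -- nonzero x, y
  have hx : x ≠ ⊥ := by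
    intro h
    have hzy : z = y := by
      have : z ⊔ x = x ⊔ y := e12.trans e23
      rw [h, sup_bot_eq, bot_sup_eq] at this
      exact this
    have : z ≤ ⊥ := by
      rw [← hcb]
      exact le_inf hzc (hzy.le.trans hyb)
    exact hz (le_bot_iff.mp this)
  have hy : y ≠ ⊥ := by
    intro h
    have hzx : z = x := by
      have : z ⊔ y = x ⊔ y := e23
      rw [h, sup_bot_eq, sup_bot_eq] at this
      exact this
    have : z ≤ ⊥ := by
      rw [← hca]
      exact le_inf hzc (hzx.le.trans hxa)
    exact hz (le_bot_iff.mp this)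
  exact ⟨hx, hy, hz, mzx, mzy, e12, e23⟩
end

section
/- The subgroup lattice of any group G contains no triple (A, B, C) of nontrivial subgroups with C ⊓ A = C ⊓ B = ⊥ and C ⊔ A = C ⊔ B = A ⊔ B if and only if the subgroup lattice of G is pseudocomplemented, provided G is abelian. -/
set_option maxHeartbeats 1000000

theorem stmt_14 {G : Type*} [CommGroup G] :
    (¬ ∃ A B C : Subgroup G, A ≠ ⊥ ∧ B ≠ ⊥ ∧ C ≠ ⊥ ∧
      C ⊓ A = ⊥ ∧ C ⊓ B = ⊥ ∧ C ⊔ A = C ⊔ B ∧ C ⊔ B = A ⊔ B) ↔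
    (∀ H : Subgroup G, ∃ K : Subgroup G, H ⊓ K = ⊥ ∧
      ∀ X : Subgroup G, H ⊓ X = ⊥ → X ≤ K) := by
  constructor
  · intro hno H
    -- pairwise closure lemma
    have pair : ∀ X Y : Subgroup G, H ⊓ X = ⊥ → H ⊓ Y = ⊥ → H ⊓ (X ⊔ Y) = ⊥ := by
      intro X Y hX hY
      by_contra hne
      obtain ⟨⟨g, hg⟩, hg1⟩ := Subgroup.ne_bot_iff_exists_ne_one.mp hne
      have hg1 : g ≠ 1 := by simpa [Subtype.ext_iff] using hg1
      have hgH : g ∈ H := hg.1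
      obtain ⟨x, hx, y, hy, hxy⟩ := Subgroup.mem_sup.mp hg.2
      have hxne : x ≠ 1 := by
        rintro rfl
        rw [one_mul] at hxy
        have : g ∈ H ⊓ Y := Subgroup.mem_inf.mpr ⟨hgH, hxy ▸ hy⟩
        rw [hY, Subgroup.mem_bot] at this
        exact hg1 this
      have hyne : y ≠ 1 := by
        rintro rfl
        rw [mul_one] at hxy
        have : g ∈ H ⊓ X := Subgroup.mem_inf.mpr ⟨hgH, hxy ▸ hx⟩
        rw [hX, Subgroup.mem_bot] at this
        exact hg1 this
      refine hno ⟨Subgroup.zpowers x, Subgroup.zpowers y, Subgroup.zpowers g,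
        ?_, ?_, ?_, ?_, ?_, ?_, ?_⟩
      · simpa [Subgroup.zpowers_eq_bot] using hxne
      · simpa [Subgroup.zpowers_eq_bot] using hyne
      · simpa [Subgroup.zpowers_eq_bot] using hg1
      · rw [eq_bot_iff, ← hX]
        exact inf_le_inf (Subgroup.zpowers_le.mpr hgH) (Subgroup.zpowers_le.mpr hx)
      · rw [eq_bot_iff, ← hY]
        exact inf_le_inf (Subgroup.zpowers_le.mpr hgH) (Subgroup.zpowers_le.mpr hy)
      · -- C ⊔ A = C ⊔ B : show both equal A ⊔ B
        have hCsub : Subgroup.zpowers g ≤ Subgroup.zpowers x ⊔ Subgroup.zpowers y := by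
          refine Subgroup.zpowers_le.mpr ?_
          rw [← hxy]
          exact Subgroup.mul_mem _
            (Subgroup.mem_sup_left (Subgroup.mem_zpowers x))
            (Subgroup.mem_sup_right (Subgroup.mem_zpowers y))
        have e1 : Subgroup.zpowers g ⊔ Subgroup.zpowers x
            = Subgroup.zpowers x ⊔ Subgroup.zpowers y := by
          refine le_antisymm (sup_le hCsub le_sup_left) (sup_le le_sup_right ?_)
          refine Subgroup.zpowers_le.mpr ?_
          have heq : y = x⁻¹ * g := by rw [← hxy]; group
          rw [heq]
          exact Subgroup.mul_mem _
            (Subgroup.mem_sup_right (Subgroup.inv_mem _ (Subgroup.mem_zpowers x)))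
            (Subgroup.mem_sup_left (Subgroup.mem_zpowers g))
        have e2 : Subgroup.zpowers g ⊔ Subgroup.zpowers y
            = Subgroup.zpowers x ⊔ Subgroup.zpowers y := by
          refine le_antisymm (sup_le hCsub le_sup_right) (sup_le ?_ le_sup_right)
          refine Subgroup.zpowers_le.mpr ?_
          have heq : x = g * y⁻¹ := by rw [← hxy]; group
          rw [heq]
          exact Subgroup.mul_mem _
            (Subgroup.mem_sup_left (Subgroup.mem_zpowers g))
            (Subgroup.mem_sup_right (Subgroup.inv_mem _ (Subgroup.mem_zpowers y)))
        rw [e1, e2]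
      · refine le_antisymm (sup_le ?_ le_sup_right) (sup_le ?_ le_sup_right)
        · refine Subgroup.zpowers_le.mpr ?_
          rw [← hxy]
          exact Subgroup.mul_mem _
            (Subgroup.mem_sup_left (Subgroup.mem_zpowers x))
            (Subgroup.mem_sup_right (Subgroup.mem_zpowers y))
        · refine Subgroup.zpowers_le.mpr ?_
          have heq : x = g * y⁻¹ := by rw [← hxy]; group
          rw [heq]
          exact Subgroup.mul_mem _
            (Subgroup.mem_sup_left (Subgroup.mem_zpowers g))
            (Subgroup.mem_sup_right (Subgroup.inv_mem _ (Subgroup.mem_zpowers y)))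
    -- pseudocomplement via sSup
    set S : Set (Subgroup G) := {X | H ⊓ X = ⊥} with hS
    refine ⟨sSup S, ?_, fun X hX => le_sSup hX⟩
    have hne : S.Nonempty := ⟨⊥, by simp [hS]⟩
    have hdir : DirectedOn (· ≤ ·) S := fun X hX Y hY =>
      ⟨X ⊔ Y, pair X Y hX hY, le_sup_left, le_sup_right⟩
    rw [eq_bot_iff]
    rintro g ⟨hgH, hgSup⟩
    obtain ⟨X, hXS, hgX⟩ := (Subgroup.mem_sSup_of_directedOn hne hdir).mp hgSup
    exact hXS ▸ Subgroup.mem_inf.mpr ⟨hgH, hgX⟩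
  · rintro hpc ⟨A, B, C, hA, hB, hC, hCA, hCB, h1, h2⟩
    obtain ⟨K, hCK, hmax⟩ := hpc C
    have hAK : A ≤ K := hmax A hCA
    have hBK : B ≤ K := hmax B hCB
    have hCK' : C ≤ K := by
      have h : C ≤ A ⊔ B := h2 ▸ h1 ▸ le_sup_left
      exact h.trans (sup_le hAK hBK)
    exact hC (le_bot_iff.mp (hCK ▸ le_inf le_rfl hCK'))
end

section
/- For an abelian group G, the subgroup lattice of G is distributive if and only if G contains no three nontrivial subgroups U, V, W with U ⊓ W = V ⊓ W = ⊥ and U ⊔ V = U ⊔ W = V ⊔ W. -/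
/-!
In a distributive lattice no such triple exists: `W ≤ U ⊔ V` gives
`W = (W ⊓ U) ⊔ (W ⊓ V) = ⊥`. Conversely, `A ⊓ (B ⊔ C) ≤ (A ⊓ B) ⊔ (A ⊓ C)` only has to be
checked on products `b * c` with `b ∈ B`, `c ∈ C`, and it holds whenever `⟨b, c⟩` is cyclic.
A Smith normal form of the lattice of relations between `b` and `c` writes `⟨b, c⟩` as an internal
direct product `⟨g₀⟩ × ⟨g₁⟩`. If this is not cyclic, the orders of `g₀` and `g₁` are not coprime
(order `0` meaning infinite), and suitable powers `u`, `w` of them are nontrivial, independent,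
with `orderOf w ∣ orderOf u`; then `⟨u⟩`, `⟨u * w⟩`, `⟨w⟩` is a forbidden triple.
-/

theorem Module.Basis.SmithNormalForm.repr_smul_mem {R M ι : Type*} [CommRing R] [AddCommGroup M]
    [Module R M] {N : Submodule R M} {n : ℕ} (snf : Basis.SmithNormalForm N ι n) {m : M}
    (hm : m ∈ N) (i : ι) : snf.bM.repr m i • snf.bM i ∈ N := by
  by_cases hi : i ∈ Set.range snf.f
  · obtain ⟨k, rfl⟩ := hi
    have hcoord : snf.bM.repr m (snf.f k) = snf.a k * snf.bN.repr ⟨m, hm⟩ k :=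
      congrFun (snf.repr_comp_embedding_eq_smul ⟨m, hm⟩) k
    rw [hcoord, mul_comm, mul_smul, ← snf.snf]
    exact N.smul_mem _ (snf.bN k).2
  · rw [snf.repr_eq_zero_of_notMem_range ⟨m, hm⟩ hi, zero_smul]
    exact N.zero_mem

theorem Module.Basis.exists_basis_map_smul_eq_zero_of_map_sum_eq_zero {R M P ι : Type*}
    [CommRing R] [IsDomain R] [IsPrincipalIdealRing R] [AddCommGroup M] [Module R M]
    [AddCommGroup P] [Module R P] [Fintype ι] (b : Basis ι R M) (φ : M →ₗ[R] P) :
    ∃ e : Basis ι R M, ∀ c : ι → R, φ (∑ i, c i • e i) = 0 → ∀ i, φ (c i • e i) = 0 := by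
  let snf := ((LinearMap.ker φ).smithNormalForm b).2
  refine ⟨snf.bM, fun c hc i => ?_⟩
  simpa only [snf.bM.repr_sum_self, LinearMap.mem_ker] using snf.repr_smul_mem hc i

namespace Subgroup

section Group

variable {G : Type*} [Group G]

theorem zpowers_sup_zpowers_mul (x y : G) :
    zpowers x ⊔ zpowers (x * y) = zpowers x ⊔ zpowers y := by
  refine le_antisymm (sup_le le_sup_left (zpowers_le.2 ?_)) (sup_le le_sup_left (zpowers_le.2 ?_))
  · exact mul_mem (mem_sup_left (mem_zpowers x)) (mem_sup_right (mem_zpowers y))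
  · simpa using mul_mem (mem_sup_left (inv_mem (mem_zpowers x))) (mem_sup_right (mem_zpowers (x * y)))

theorem zpowers_mul_sup_zpowers (x y : G) :
    zpowers (x * y) ⊔ zpowers y = zpowers x ⊔ zpowers y := by
  refine le_antisymm (sup_le (zpowers_le.2 ?_) le_sup_right) (sup_le (zpowers_le.2 ?_) le_sup_right)
  · exact mul_mem (mem_sup_left (mem_zpowers x)) (mem_sup_right (mem_zpowers y))
  · simpa using mul_mem (mem_sup_left (mem_zpowers (x * y))) (mem_sup_right (inv_mem (mem_zpowers y)))

theorem mem_zpowers_mul_of_coprime {u w : G} (hc : Commute u w)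
    (h : (orderOf u).Coprime (orderOf w)) : u ∈ zpowers (u * w) := by
  obtain ⟨m, hm⟩ := exists_pow_eq_self_of_coprime h.symm
  have hpow : (u * w) ^ orderOf w = u ^ orderOf w := by
    rw [hc.mul_pow, pow_orderOf_eq_one, mul_one]
  simpa only [hpow, hm] using pow_mem (pow_mem (mem_zpowers (u * w)) (orderOf w)) m

theorem zpowers_mul_eq_sup_of_coprime {u w : G} (hc : Commute u w)
    (h : (orderOf u).Coprime (orderOf w)) : zpowers (u * w) = zpowers u ⊔ zpowers w := by
  refine le_antisymm (zpowers_le.2 ?_) (sup_le (zpowers_le.2 ?_) (zpowers_le.2 ?_))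
  · exact mul_mem (mem_sup_left (mem_zpowers u)) (mem_sup_right (mem_zpowers w))
  · exact mem_zpowers_mul_of_coprime hc h
  · rw [hc.eq]
    exact mem_zpowers_mul_of_coprime hc.symm h.symm

end Group

variable {G : Type*} [CommGroup G]

def IsDiamond (U V W : Subgroup G) : Prop :=
  U ≠ ⊥ ∧ V ≠ ⊥ ∧ W ≠ ⊥ ∧ U ⊓ W = ⊥ ∧ V ⊓ W = ⊥ ∧ U ⊔ V = U ⊔ W ∧ U ⊔ W = V ⊔ W

theorem isDiamond_zpowers {u w : G} (hu : u ≠ 1) (hw : w ≠ 1)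
    (hdisj : zpowers u ⊓ zpowers w = ⊥) (hord : orderOf w ∣ orderOf u) :
    IsDiamond (zpowers u) (zpowers (u * w)) (zpowers w) := by
  have hindep : ∀ y, y ∈ zpowers u → y ∈ zpowers w → y = 1 := fun y hyu hyw =>
    (mem_bot.1 (hdisj ▸ mem_inf.2 ⟨hyu, hyw⟩))
  refine ⟨by simpa using hu, ?_, by simpa using hw, hdisj, ?_,
    by rw [zpowers_sup_zpowers_mul], by rw [zpowers_mul_sup_zpowers]⟩
  · rw [Ne, zpowers_eq_bot]
    intro huw
    refine hu (hindep u (mem_zpowers u) ?_)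
    rw [eq_inv_of_mul_eq_one_left huw]
    exact inv_mem (mem_zpowers w)
  · rw [eq_bot_iff]
    rintro _ ⟨⟨i, rfl⟩, ⟨j, hj⟩⟩
    have hui : u ^ i = 1 := by
      refine hindep _ (zpow_mem (mem_zpowers u) i) ⟨j - i, ?_⟩
      simp only [zpow_sub, hj, mul_zpow, mul_inv_cancel_right]
    have hwi : w ^ i = 1 :=
      orderOf_dvd_iff_zpow_eq_one.1 ((Int.natCast_dvd_natCast.2 hord).trans
        (orderOf_dvd_iff_zpow_eq_one.2 hui))
    simp [mul_zpow, hui, hwi]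

theorem exists_isDiamond_of_not_coprime {u w : G} (hu : u ≠ 1) (hw : w ≠ 1)
    (hdisj : zpowers u ⊓ zpowers w = ⊥) (hcop : ¬ (orderOf u).Coprime (orderOf w)) :
    ∃ U V W : Subgroup G, IsDiamond U V W := by
  rcases eq_or_ne (orderOf u) 0 with hu0 | hu0
  · exact ⟨_, _, _, isDiamond_zpowers hu hw hdisj (hu0 ▸ dvd_zero _)⟩
  rcases eq_or_ne (orderOf w) 0 with hw0 | hw0
  · exact ⟨_, _, _, isDiamond_zpowers hw hu (inf_comm (zpowers u) _ ▸ hdisj) (hw0 ▸ dvd_zero _)⟩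
  set d := (orderOf u).gcd (orderOf w)
  have hud : orderOf (u ^ (orderOf u / d)) = d := orderOf_pow_orderOf_div hu0 (Nat.gcd_dvd_left ..)
  have hwd : orderOf (w ^ (orderOf w / d)) = d := orderOf_pow_orderOf_div hw0 (Nat.gcd_dvd_right ..)
  refine ⟨_, _, _, isDiamond_zpowers (u := u ^ (orderOf u / d)) (w := w ^ (orderOf w / d))
    (fun h => hcop (hud.symm.trans (by rw [h, orderOf_one])))
    (fun h => hcop (hwd.symm.trans (by rw [h, orderOf_one])))
    ?_ (by rw [hud, hwd])⟩
  refine eq_bot_iff.2 (le_trans (inf_le_inf ?_ ?_) hdisj.le) <;>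
    exact zpowers_le.2 (pow_mem (mem_zpowers _) _)

theorem exists_zpowers_eq_sup_of_not_isDiamond (h : ¬ ∃ U V W : Subgroup G, IsDiamond U V W)
    {u w : G} (hdisj : zpowers u ⊓ zpowers w = ⊥) : ∃ g, zpowers g = zpowers u ⊔ zpowers w := by
  by_cases hu : u = 1
  · exact ⟨w, by simp [hu]⟩
  by_cases hw : w = 1
  · exact ⟨u, by simp [hw]⟩
  by_cases hcop : (orderOf u).Coprime (orderOf w)
  · exact ⟨u * w, zpowers_mul_eq_sup_of_coprime (Commute.all u w) hcop⟩
  · exact (h (exists_isDiamond_of_not_coprime hu hw hdisj hcop)).elim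

theorem exists_disjoint_zpowers_sup_eq (b c : G) :
    ∃ g₀ g₁ : G, zpowers g₀ ⊓ zpowers g₁ = ⊥ ∧ zpowers g₀ ⊔ zpowers g₁ = zpowers b ⊔ zpowers c := by
  let φ := Fintype.linearCombination ℤ ![Additive.ofMul b, Additive.ofMul c]
  obtain ⟨e, he⟩ := (Pi.basisFun ℤ (Fin 2)).exists_basis_map_smul_eq_zero_of_map_sum_eq_zero φ
  set g : Fin 2 → G := fun j => (φ (e j)).toMul
  have hφ : ∀ v, (φ v).toMul = b ^ v 0 * c ^ v 1 := fun v => by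
    simp [φ, Fintype.linearCombination_apply]
  have hφe : ∀ k : Fin 2 → ℤ, (φ (∑ j, k j • e j)).toMul = g 0 ^ k 0 * g 1 ^ k 1 := fun k => by
    rw [Fin.sum_univ_two, map_add, map_zsmul, map_zsmul, toMul_add, toMul_zsmul, toMul_zsmul]
  have hbc : ∀ v, (φ v).toMul ∈ zpowers b ⊔ zpowers c := fun v => by
    rw [hφ]
    exact mul_mem (mem_sup_left (zpow_mem (mem_zpowers b) _))
      (mem_sup_right (zpow_mem (mem_zpowers c) _))
  have hg : ∀ v, (φ v).toMul ∈ zpowers (g 0) ⊔ zpowers (g 1) := fun v => by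
    rw [← e.sum_repr v, hφe]
    exact mul_mem (mem_sup_left (zpow_mem (mem_zpowers _) _))
      (mem_sup_right (zpow_mem (mem_zpowers _) _))
  refine ⟨g 0, g 1, ?_, le_antisymm ?_ ?_⟩
  · rw [eq_bot_iff]
    rintro _ ⟨⟨i, rfl⟩, ⟨j, hj⟩⟩
    have hker : φ (∑ k, ![i, -j] k • e k) = 0 := by
      apply Additive.toMul.injective
      rw [hφe]
      simp [hj]
    have := congrArg Additive.toMul (he _ hker 0)
    rwa [map_zsmul, toMul_zsmul, toMul_zero] at this
  · exact sup_le (zpowers_le.2 (hbc _)) (zpowers_le.2 (hbc _))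
  · refine sup_le (zpowers_le.2 ?_) (zpowers_le.2 ?_)
    · simpa [hφ] using hg (Pi.single 0 1)
    · simpa [hφ] using hg (Pi.single 1 1)

theorem mul_mem_inf_sup_inf_of_zpowers_eq_sup {A B C : Subgroup G} {b c g : G}
    (hg : zpowers g = zpowers b ⊔ zpowers c) (hA : b * c ∈ A) (hB : b ∈ B) (hC : c ∈ C) :
    b * c ∈ A ⊓ B ⊔ A ⊓ C := by
  obtain ⟨m, rfl⟩ := mem_zpowers_iff.1 (hg ▸ mem_sup_left (mem_zpowers b))
  obtain ⟨n, rfl⟩ := mem_zpowers_iff.1 (hg ▸ mem_sup_right (mem_zpowers c))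
  obtain ⟨_, ⟨s, rfl⟩, _, ⟨t, rfl⟩, hst⟩ := mem_sup.1 (hg ▸ mem_zpowers g)
  simp only [← zpow_mul, ← zpow_add] at hst hA hB hC ⊢
  -- `g = b ^ s * c ^ t` splits `b * c` as `(b * c) ^ (s * m) * (b * c) ^ (t * n)`, and
  -- `(b * c) ^ (s * m) = b ^ ((m + n) * s)`, `(b * c) ^ (t * n) = c ^ ((m + n) * t)`.
  have hsplit : g ^ (m + n) = g ^ ((m + n) * (s * m)) * g ^ ((m + n) * (t * n)) := by
    rw [← zpow_add, show (m + n) * (s * m) + (m + n) * (t * n) = (m * s + n * t) * (m + n) by ring,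
      zpow_mul, hst]
  rw [hsplit]
  refine mul_mem (mem_sup_left (mem_inf.2 ⟨?_, ?_⟩)) (mem_sup_right (mem_inf.2 ⟨?_, ?_⟩))
  · simpa only [zpow_mul] using zpow_mem hA (s * m)
  · simpa only [show (m + n) * (s * m) = m * ((m + n) * s) by ring, zpow_mul] using
      zpow_mem hB ((m + n) * s)
  · simpa only [zpow_mul] using zpow_mem hA (t * n)
  · simpa only [show (m + n) * (t * n) = n * ((m + n) * t) by ring, zpow_mul] using
      zpow_mem hC ((m + n) * t)

end Subgroup

open Subgroup in
theorem stmt_15 {G : Type*} [CommGroup G] :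
    (∀ A B C : Subgroup G, A ⊓ (B ⊔ C) = (A ⊓ B) ⊔ (A ⊓ C)) ↔
    ¬ ∃ U V W : Subgroup G, U ≠ ⊥ ∧ V ≠ ⊥ ∧ W ≠ ⊥ ∧
      U ⊓ W = ⊥ ∧ V ⊓ W = ⊥ ∧ U ⊔ V = U ⊔ W ∧ U ⊔ W = V ⊔ W := by
  constructor
  · rintro hdist ⟨U, V, W, -, -, hW, hUW, hVW, hsup, -⟩
    have hWle : W ≤ U ⊔ V := hsup ▸ le_sup_right
    exact hW (by rw [← inf_eq_left.2 hWle, hdist, inf_comm W U, inf_comm W V, hUW, hVW, sup_idem])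
  · intro h A B C
    refine le_antisymm (fun x hx => ?_) le_inf_sup
    obtain ⟨hxA, hxBC⟩ := mem_inf.1 hx
    obtain ⟨b, hb, c, hc, rfl⟩ := mem_sup.1 hxBC
    obtain ⟨g₀, g₁, hdisj, hsup⟩ := exists_disjoint_zpowers_sup_eq b c
    obtain ⟨g, hg⟩ := exists_zpowers_eq_sup_of_not_isDiamond h hdisj
    exact mul_mem_inf_sup_inf_of_zpowers_eq_sup (hg.trans hsup) hxA hb hc
end
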